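/- Let G be a graph, D ⊆ V(G), and k an integer. If G has a (D,k)-feasible set S with |S| + max_{C ∈ cc(G−S)} |V(C)| ≤ m, then G has an irredundant (D,k)-feasible set S' with |S'| + max_{C ∈ cc(G−S')} |V(C)| ≤ m; in particular, there exists a (D,k)-feasible vi-set of G that contains no simplicial vertex. -/
import Mathlib


namespace VI

open SimpleGraph

variable {V : Type*}

/-- Total weight of a set of vertices. -/
noncomputable def setWeight (w : V → ℕ) (X : Set V) : ℕ := ∑ᶠ v ∈ X, w v

/-- Maximum weight of a connected component of `G − S`. -/
noncomputable def compMax (G : SimpleGraph V) (w : V → ℕ) (S : Set V) : ℕ :=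
  sSup {n | ∃ C : (G.induce Sᶜ).ConnectedComponent, n = setWeight w (Subtype.val '' C.supp)}

/-- `w(S) + max_{C ∈ cc(G−S)} w(V(C))`. -/
noncomputable def viCost (G : SimpleGraph V) (w : V → ℕ) (S : Set V) : ℕ :=
  setWeight w S + compMax G w S

/-- The weighted vertex integrity of `G`. -/
noncomputable def wvi (G : SimpleGraph V) (w : V → ℕ) : ℕ := ⨅ S : Set V, viCost G w S

/-- Maximum number of vertices of a connected component of `G − S`. -/
noncomputable def uCompMax (G : SimpleGraph V) (S : Set V) : ℕ :=
  sSup {n | ∃ C : (G.induce Sᶜ).ConnectedComponent, n = C.supp.ncard}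

/-- `|S| + max_{C ∈ cc(G−S)} |V(C)|`. -/
noncomputable def uViCost (G : SimpleGraph V) (S : Set V) : ℕ := S.ncard + uCompMax G S

/-- The (unweighted) vertex integrity of `G`. -/
noncomputable def uvi (G : SimpleGraph V) : ℕ := ⨅ S : Set V, uViCost G S

/-- A vertex `v` is redundant w.r.t. `S` if at most one connected component of `G − S`
contains a neighbor of `v`. -/
def Redundant (G : SimpleGraph V) (S : Set V) (v : V) : Prop :=
  {C : (G.induce Sᶜ).ConnectedComponent | ∃ u : (Sᶜ : Set V), G.Adj v ↑u ∧ u ∈ C.supp}.Subsingleton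

/-- `S` is irredundant if it contains no redundant vertex. -/
def Irredundant (G : SimpleGraph V) (S : Set V) : Prop := ∀ v ∈ S, ¬ Redundant G S v

end VI

namespace VI

/-- `S` is `(D,k)`-feasible if `S ∩ D = ∅` and `|S| ≤ k`. -/
def DkFeasible {V : Type*} (D : Set V) (k : ℕ) (S : Set V) : Prop :=
  S ∩ D = ∅ ∧ S.ncard ≤ k

/-- A `(D,k)`-feasible vi-set: a `(D,k)`-feasible set minimizing
`|S| + max_{C ∈ cc(G−S)} |V(C)|` among all `(D,k)`-feasible sets. -/
def IsDkFeasibleViSet {V : Type*} (G : SimpleGraph V) (D : Set V) (k : ℕ) (S : Set V) :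
    Prop :=
  DkFeasible D k S ∧ ∀ S' : Set V, DkFeasible D k S' → uViCost G S ≤ uViCost G S'

end VI


namespace VI
open SimpleGraph

variable {V : Type*}

private lemma memc {S : Set V} {v : V} (z : ↥(S \ {v})ᶜ) (h : (z : V) ≠ v) : (z : V) ∈ Sᶜ :=
  fun hz => z.2 ⟨hz, h⟩

private lemma walk_proj {G : SimpleGraph V} {S : Set V} {v : V}
    (hred : ∀ (a b : V) (ha : a ∈ Sᶜ) (hb : b ∈ Sᶜ), G.Adj v a → G.Adj v b →
      (G.induce Sᶜ).Reachable ⟨a, ha⟩ ⟨b, hb⟩) :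
    ∀ (n : ℕ) (x y : ↥(S \ {v})ᶜ) (p : (G.induce (S \ {v})ᶜ).Walk x y), p.length = n →
      ∀ (hx : (x : V) ∈ Sᶜ) (hy : (y : V) ∈ Sᶜ),
        (G.induce Sᶜ).Reachable ⟨(x : V), hx⟩ ⟨(y : V), hy⟩ := by
  intro n
  induction n using Nat.strong_induction_on with
  | _ n ih =>
    intro x y p hl hx hy
    cases p with
    | nil => exact Reachable.refl _
    | @cons _ z _ h q =>
      by_cases hzv : (z : V) = v
      · cases q with
        | nil =>
          exact Adj.reachable (by exact h)
        | @cons _ w _ h2 q2 =>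
          have hG2 : G.Adj (z : V) (w : V) := h2
          have hwv : (w : V) ≠ v := fun hw => (hG2.ne) (by rw [hzv, hw])
          have hw := memc w hwv
          have hG1 : G.Adj (x : V) (z : V) := h
          have hvx : G.Adj v (x : V) := by have := hG1.symm; rwa [hzv] at this
          have hvw : G.Adj v (w : V) := by have := hG2; rwa [hzv] at this
          have hr1 : (G.induce Sᶜ).Reachable ⟨(x : V), hx⟩ ⟨(w : V), hw⟩ :=
            hred _ _ hx hw hvx hvw
          have hr2 := ih q2.length (by simp at hl; omega) w y q2 rfl hw hy
          exact hr1.trans hr2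
      · have hz := memc z hzv
        have hr1 : (G.induce Sᶜ).Reachable ⟨(x : V), hx⟩ ⟨(z : V), hz⟩ :=
          Adj.reachable (by exact h)
        have hr2 := ih q.length (by simp at hl; omega) z y q rfl hz hy
        exact hr1.trans hr2

private lemma bddA [Fintype V] (G : SimpleGraph V) (S : Set V) :
    BddAbove {n | ∃ C : (G.induce Sᶜ).ConnectedComponent, n = C.supp.ncard} := by
  refine ⟨Fintype.card V, ?_⟩
  rintro n ⟨C, rfl⟩
  calc C.supp.ncard = (Subtype.val '' C.supp).ncard :=
        (Set.ncard_image_of_injective _ Subtype.val_injective).symm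
    _ ≤ (Set.univ : Set V).ncard := Set.ncard_le_ncard (Set.subset_univ _) Set.finite_univ
    _ = Fintype.card V := by simp [Set.ncard_univ, Nat.card_eq_fintype_card]

private lemma cost_erase [Fintype V] {G : SimpleGraph V} {S : Set V} {v : V} (hv : v ∈ S)
    (hred : Redundant G S v) : uViCost G (S \ {v}) ≤ uViCost G S := by
  have hred' : ∀ (a b : V) (ha : a ∈ Sᶜ) (hb : b ∈ Sᶜ), G.Adj v a → G.Adj v b →
      (G.induce Sᶜ).Reachable ⟨a, ha⟩ ⟨b, hb⟩ := by
    intro a b ha hb hva hvb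
    have h1 : (G.induce Sᶜ).connectedComponentMk ⟨a, ha⟩ ∈
        {C : (G.induce Sᶜ).ConnectedComponent | ∃ u : (Sᶜ : Set V), G.Adj v ↑u ∧ u ∈ C.supp} :=
      ⟨⟨a, ha⟩, hva, (ConnectedComponent.mem_supp_iff _ _).mpr rfl⟩
    have h2 : (G.induce Sᶜ).connectedComponentMk ⟨b, hb⟩ ∈
        {C : (G.induce Sᶜ).ConnectedComponent | ∃ u : (Sᶜ : Set V), G.Adj v ↑u ∧ u ∈ C.supp} :=
      ⟨⟨b, hb⟩, hvb, (ConnectedComponent.mem_supp_iff _ _).mpr rfl⟩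
    exact ConnectedComponent.eq.mp (hred h1 h2)
  have hbound : ∀ C' : (G.induce (S \ {v})ᶜ).ConnectedComponent,
      C'.supp.ncard ≤ uCompMax G S + 1 := by
    intro C'
    by_cases hA : ∃ y ∈ C'.supp, (y : V) ≠ v
    · obtain ⟨y, hy, hyv⟩ := hA
      have hySc := memc y hyv
      set C := (G.induce Sᶜ).connectedComponentMk ⟨(y : V), hySc⟩ with hC
      have hsub : Subtype.val '' C'.supp ⊆ insert v (Subtype.val '' C.supp) := by
        rintro _ ⟨z, hz, rfl⟩
        by_cases hzv : (z : V) = v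
        · exact Set.mem_insert_iff.mpr (Or.inl hzv)
        · have hzS := memc z hzv
          have hr : (G.induce Sᶜ).Reachable ⟨(z : V), hzS⟩ ⟨(y : V), hySc⟩ := by
            have hreach : (G.induce (S \ {v})ᶜ).Reachable z y := by
              rw [← ConnectedComponent.eq]
              rw [ConnectedComponent.mem_supp_iff] at hz hy
              rw [hz, hy]
            obtain ⟨p⟩ := hreach
            exact walk_proj hred' p.length z y p rfl hzS hySc
          refine Set.mem_insert_iff.mpr (Or.inr ⟨⟨(z : V), hzS⟩, ?_, rfl⟩)
          rw [ConnectedComponent.mem_supp_iff, hC]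
          exact ConnectedComponent.eq.mpr hr
      have hCle : C.supp.ncard ≤ uCompMax G S := le_csSup (bddA G S) ⟨C, rfl⟩
      calc C'.supp.ncard = (Subtype.val '' C'.supp).ncard :=
            (Set.ncard_image_of_injective _ Subtype.val_injective).symm
        _ ≤ (insert v (Subtype.val '' C.supp)).ncard :=
            Set.ncard_le_ncard hsub (Set.toFinite _)
        _ ≤ (Subtype.val '' C.supp).ncard + 1 := Set.ncard_insert_le _ _
        _ = C.supp.ncard + 1 := by rw [Set.ncard_image_of_injective _ Subtype.val_injective]
        _ ≤ uCompMax G S + 1 := by omega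
    · push_neg at hA
      have hsub : Subtype.val '' C'.supp ⊆ {v} := by rintro _ ⟨z, hz, rfl⟩; exact hA z hz
      calc C'.supp.ncard = (Subtype.val '' C'.supp).ncard :=
            (Set.ncard_image_of_injective _ Subtype.val_injective).symm
        _ ≤ ({v} : Set V).ncard := Set.ncard_le_ncard hsub (Set.toFinite _)
        _ = 1 := Set.ncard_singleton _
        _ ≤ uCompMax G S + 1 := by omega
  have h1 : (S \ {v}).ncard + 1 = S.ncard := Set.ncard_diff_singleton_add_one hv (Set.toFinite S)
  have h2 : uCompMax G (S \ {v}) ≤ uCompMax G S + 1 := by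
    apply csSup_le'
    rintro n ⟨C', rfl⟩
    exact hbound C'
  unfold uViCost
  omega

private lemma improve [Fintype V] (G : SimpleGraph V) (D : Set V) (k : ℕ) :
    ∀ (n : ℕ) (S : Set V), S.ncard = n → DkFeasible D k S →
      ∃ S', Irredundant G S' ∧ DkFeasible D k S' ∧ uViCost G S' ≤ uViCost G S := by
  intro n
  induction n using Nat.strong_induction_on with
  | _ n ih =>
    intro S hn hfeas
    by_cases hirr : Irredundant G S
    · exact ⟨S, hirr, hfeas, le_refl _⟩
    · unfold Irredundant at hirr; push_neg at hirr
      obtain ⟨v, hv, hred⟩ := hirr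
      have hc : (S \ {v}).ncard + 1 = S.ncard := Set.ncard_diff_singleton_add_one hv (Set.toFinite S)
      have hsub : (S \ {v}) ∩ D ⊆ S ∩ D := Set.inter_subset_inter_left D Set.diff_subset
      rw [hfeas.1] at hsub
      have hfeas' : DkFeasible D k (S \ {v}) :=
        ⟨Set.subset_empty_iff.mp hsub, by have := hfeas.2; omega⟩
      obtain ⟨S', a, b, c⟩ := ih (S \ {v}).ncard (by omega) _ rfl hfeas'
      exact ⟨S', a, b, c.trans (cost_erase hv hred)⟩

end VI

open VI SimpleGraph in
/-- If `G` has a `(D,k)`-feasible set of cost at most `m`, then it has an irredundant one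
of cost at most `m`; in particular there is a `(D,k)`-feasible vi-set containing no
simplicial vertex. -/
theorem statement16 {V : Type*} [Fintype V] (G : SimpleGraph V) (D : Set V) (k m : ℕ)
    (h : ∃ S : Set V, DkFeasible D k S ∧ uViCost G S ≤ m) :
    (∃ S' : Set V, Irredundant G S' ∧ DkFeasible D k S' ∧ uViCost G S' ≤ m) ∧
      (∃ S'' : Set V, IsDkFeasibleViSet G D k S'' ∧
        ∀ x ∈ S'', ¬ G.IsClique (G.neighborSet x)) := by
  classical
  obtain ⟨S₀, hfeas₀, hm₀⟩ := h
  constructor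
  · obtain ⟨S', a, b, c⟩ := improve G D k S₀.ncard S₀ rfl hfeas₀
    exact ⟨S', a, b, c.trans hm₀⟩
  · have hP : ∃ n, ∃ S : Set V, DkFeasible D k S ∧ uViCost G S = n := ⟨_, S₀, hfeas₀, rfl⟩
    obtain ⟨S₁, hfeas₁, hcost₁⟩ := Nat.find_spec hP
    obtain ⟨S'', hirr, hfeas'', hle⟩ := improve G D k S₁.ncard S₁ rfl hfeas₁
    refine ⟨S'', ⟨hfeas'', ?_⟩, ?_⟩
    · intro T hT
      have hfind : Nat.find hP ≤ uViCost G T := Nat.find_min' hP ⟨T, hT, rfl⟩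
      omega
    · intro x hx hclique
      refine hirr x hx ?_
      intro C₁ hC₁ C₂ hC₂
      obtain ⟨u₁, ha₁, hs₁⟩ := hC₁
      obtain ⟨u₂, ha₂, hs₂⟩ := hC₂
      rw [ConnectedComponent.mem_supp_iff] at hs₁ hs₂
      rw [← hs₁, ← hs₂]
      by_cases he : u₁ = u₂
      · rw [he]
      · refine ConnectedComponent.eq.mpr (Adj.reachable ?_)
        have hne : (u₁ : V) ≠ (u₂ : V) := fun hv => he (Subtype.ext hv)
        exact hclique ha₁ ha₂ hne
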